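/- With the notation of the quotient construction (A = B/R, axiom set (I, C) on A, induced axiom set (I^R, C^R) on B), the maps W ↦ es(W) = {b | [b] ∈ W} and V ↦ es⁻(V) = {z ∈ B/R | ∃ b ∈ V, z = [b]} form an order isomorphism between the complete lattices of fixpoints of ◁_{I,C} on B/R and of ◁^R on B. -/

import Mathlib

inductive Cover {A : Type*} (I : A → Type*) (C : ∀ a, I a → Set A) (V : Set A) : A → Prop
  | rf {a : A} : a ∈ V → Cover I C V a
  | tr {a : A} (i : I a) : (∀ y ∈ C a i, Cover I C V y) → Cover I C V a

/-! The induced cover `◁^R` on `B` is exactly the pull-back of `◁_{I,C}` along `b ↦ [b]`: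
`b ◁^R es(W)` iff `[b] ◁ W`. The extra axioms `b ◁^R {y}` for `R b y` make every fixpoint
of `◁^R` `R`-saturated, so `es⁻` followed by `es` is the identity on fixpoints, and `es` is
an order embedding because `b ↦ [b]` is surjective. -/

open Set

section InducedCover

universe u v

variable {B : Type u} {sR : Setoid B}
    {I : Quotient sR → Type v} {C : ∀ a, I a → Set (Quotient sR)}
    {IR : B → Type (max u v)} {hIR : ∀ b, IR b = (I ⟦b⟧ ⊕ {y : B // sR.r b y})}
    {CR : ∀ b, IR b → Set B}
    (hCR : ∀ b j, CR b j =
      Sum.elim (fun j : I ⟦b⟧ => {x : B | (⟦x⟧ : Quotient sR) ∈ C ⟦b⟧ j})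
               (fun y : {y : B // sR.r b y} => {y.1}) (cast (hIR b) j))

include hCR

theorem cover_preimage_mk_iff (W : Set (Quotient sR)) (b : B) :
    Cover IR CR (Quotient.mk sR ⁻¹' W) b ↔ Cover I C W ⟦b⟧ := by
  constructor
  · intro h
    induction h with
    | rf h => exact .rf h
    | @tr b i _ ih =>
      rcases hi : cast (hIR b) i with j | ⟨y, hy⟩
      · refine .tr j fun z hz => ?_
        induction z using Quotient.inductionOn with
        | h x => exact ih x (by rw [hCR, hi]; exact hz)
      · have hyb : (⟦y⟧ : Quotient sR) = ⟦b⟧ := Quotient.sound (sR.symm hy)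
        exact hyb ▸ ih y (by rw [hCR, hi]; rfl)
  · suffices ∀ z, Cover I C W z → ∀ b : B, ⟦b⟧ = z →
        Cover IR CR (Quotient.mk sR ⁻¹' W) b from fun h => this _ h b rfl
    intro z h
    induction h with
    | rf h => rintro b rfl; exact .rf h
    | @tr a i _ ih =>
      rintro b rfl
      refine .tr (cast (hIR b).symm (.inl i)) fun x hx => ?_
      rw [hCR, cast_cast, cast_eq] at hx
      exact ih ⟦x⟧ hx x rfl

theorem mem_of_rel_of_isFixpoint {V : Set B} (hV : {x | Cover IR CR V x} = V) {b b' : B}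
    (hr : sR.r b' b) (hb : b ∈ V) : b' ∈ V := by
  rw [← hV]
  refine .tr (cast (hIR b').symm (.inr ⟨b, hr⟩)) fun x hx => ?_
  rw [hCR, cast_cast, cast_eq, Sum.elim_inr, mem_singleton_iff] at hx
  exact .rf (hx ▸ hb)

theorem preimage_mk_image_of_isFixpoint {V : Set B} (hV : {x | Cover IR CR V x} = V) :
    Quotient.mk sR ⁻¹' {z | ∃ b ∈ V, z = ⟦b⟧} = V := by
  ext b
  constructor
  · rintro ⟨b', hb', hbb'⟩
    exact mem_of_rel_of_isFixpoint hCR hV (Quotient.exact hbb') hb'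
  · intro hb
    exact ⟨b, hb, rfl⟩

theorem isFixpoint_preimage_mk {W : Set (Quotient sR)} (hW : {z | Cover I C W z} = W) :
    {x | Cover IR CR (Quotient.mk sR ⁻¹' W) x} = Quotient.mk sR ⁻¹' W := by
  ext b
  rw [mem_ofPred_eq, cover_preimage_mk_iff hCR, ← mem_ofPred (p := Cover I C W), hW]
  rfl

theorem isFixpoint_image_mk {V : Set B} (hV : {x | Cover IR CR V x} = V) :
    {z | Cover I C {z | ∃ b ∈ V, z = ⟦b⟧} z} = {z | ∃ b ∈ V, z = ⟦b⟧} := by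
  ext z
  induction z using Quotient.inductionOn with
  | h b =>
    rw [mem_ofPred_eq, ← cover_preimage_mk_iff hCR, preimage_mk_image_of_isFixpoint hCR hV,
      ← mem_ofPred (p := Cover IR CR V), hV]
    exact (Set.ext_iff.mp (preimage_mk_image_of_isFixpoint hCR hV) b).symm

end InducedCover

theorem stmt7.{u, v} {B : Type u} (sR : Setoid B)
    (I : Quotient sR → Type v) (C : ∀ a, I a → Set (Quotient sR))
    (IR : B → Type (max u v)) (hIR : ∀ b, IR b = (I ⟦b⟧ ⊕ {y : B // sR.r b y}))
    (CR : ∀ b, IR b → Set B)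
    (hCR : ∀ b j, CR b j =
      Sum.elim (fun j : I ⟦b⟧ => {x : B | (⟦x⟧ : Quotient sR) ∈ C ⟦b⟧ j})
               (fun y : {y : B // sR.r b y} => {y.1}) (cast (hIR b) j)) :
    ∃ e : {W : Set (Quotient sR) // {z | Cover I C W z} = W} ≃o
          {V : Set B // {x | Cover IR CR V x} = V},
      (∀ W, (e W).1 = {b : B | (⟦b⟧ : Quotient sR) ∈ W.1}) ∧
      (∀ V, ((e.symm V).1 = {z : Quotient sR | ∃ b ∈ V.1, z = ⟦b⟧})) := by
  refine ⟨{ toFun W := ⟨Quotient.mk sR ⁻¹' W.1, isFixpoint_preimage_mk hCR W.2⟩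
            invFun V := ⟨{z | ∃ b ∈ V.1, z = ⟦b⟧}, isFixpoint_image_mk hCR V.2⟩
            left_inv W := Subtype.ext ?_
            right_inv V := Subtype.ext (preimage_mk_image_of_isFixpoint hCR V.2)
            map_rel_iff' := Quotient.mk_surjective.preimage_subset_preimage_iff },
    fun W => rfl, fun V => rfl⟩
  ext z
  induction z using Quotient.inductionOn with
  | h b => exact ⟨fun ⟨b', hb', hbb'⟩ => hbb' ▸ hb', fun hb => ⟨b, hb, rfl⟩⟩
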